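/- arXiv:1904.12394 — 4 statements merged into one kernel-verified Lean document; each statement's English description precedes it below -/
import Mathlib

section
/- If b < 0, α ∈ (π/2, π), and θ ∈ (-θ₀, π) with 0 < θ₀ < 2α - π, then f'(θ) > 0. -/
/-! Writing `s = √(a² + c²)`, the radicand is `g = (b + s sin t)² + s² cos² t` with `t = θ/2 + α`,
so it is positive as soon as `cos t ≠ 0`, and the chain rule gives `f' = b s cos t / (2 f)`.
On the given range `t` lies in `(π/2, 3π/2)`, so `cos t < 0`; together with `b < 0 < s` this makes
`f'` positive. -/

open Real

lemma sq_add_sq_add_two_mul_mul_sin_pos {u v t : ℝ} (hu : u ≠ 0) (ht : cos t ≠ 0) :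
    0 < u ^ 2 + v ^ 2 + 2 * v * u * sin t := by
  have hsum : u ^ 2 + v ^ 2 + 2 * v * u * sin t = (v + u * sin t) ^ 2 + (u * cos t) ^ 2 := by
    linear_combination -u ^ 2 * sin_sq_add_cos_sq t
  rw [hsum]
  have : 0 < (u * cos t) ^ 2 := by positivity
  positivity

lemma hasDerivAt_sqrt_add_mul_sin_half_add {p q φ x : ℝ} (hx : p + q * sin (x / 2 + φ) ≠ 0) :
    HasDerivAt (fun y => √(p + q * sin (y / 2 + φ)))
      (q * cos (x / 2 + φ) / (4 * √(p + q * sin (x / 2 + φ)))) x := by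
  have hinner : HasDerivAt (fun y : ℝ => y / 2 + φ) (1 / 2) x :=
    ((hasDerivAt_id x).div_const 2).add_const φ
  exact ((hinner.sin.const_mul q).const_add p).sqrt hx |>.congr_deriv (by ring)

theorem stmt_3_general (a b c α θ₀ θ : ℝ)
    (hb : b < 0) (hac : a ^ 2 + c ^ 2 > 0)
    (hα : α ∈ Set.Ioo (π / 2) π)
    (hθ₀ : 0 < θ₀ ∧ θ₀ < 2 * α - π)
    (hθ : θ ∈ Set.Ioo (-θ₀) π)
    (f : ℝ → ℝ)
    (hf : ∀ x : ℝ, f x = Real.sqrt (a ^ 2 + b ^ 2 + c ^ 2 +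
        2 * b * Real.sqrt (a ^ 2 + c ^ 2) * Real.sin (x / 2 + α))) :
    0 < deriv f θ := by
  set s := √(a ^ 2 + c ^ 2)
  have hs : 0 < s := sqrt_pos.mpr hac
  have hcos : cos (θ / 2 + α) < 0 :=
    cos_neg_of_pi_div_two_lt_of_lt (by linarith [hθ.1, hθ₀.2]) (by linarith [hθ.2, hα.2])
  have hradicand : 0 < a ^ 2 + b ^ 2 + c ^ 2 + 2 * b * s * sin (θ / 2 + α) := by
    have := sq_add_sq_add_two_mul_mul_sin_pos (v := b) hs.ne' hcos.ne
    rw [sq_sqrt hac.le] at this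
    linarith
  rw [show f = _ from funext hf, (hasDerivAt_sqrt_add_mul_sin_half_add hradicand.ne').deriv]
  have hq : 2 * b * s < 0 := mul_neg_of_neg_of_pos (by linarith) hs
  exact div_pos (mul_pos_of_neg_of_neg hq hcos) (by positivity)

theorem stmt_3 (a b c α θ₀ θ : ℝ)
    (hb : b < 0) (hc : c > 0) (ha : a < 0) (hac : a ^ 2 + c ^ 2 > 0)
    (hne : Real.sqrt (a ^ 2 + c ^ 2) ≠ |b|)
    (hα : α ∈ Set.Ioo (π / 2) π)
    (hsin : Real.sin α = c / Real.sqrt (a ^ 2 + c ^ 2))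
    (hcos : Real.cos α = a / Real.sqrt (a ^ 2 + c ^ 2))
    (hθ₀ : 0 < θ₀ ∧ θ₀ < 2 * α - π)
    (hθ : θ ∈ Set.Ioo (-θ₀) π)
    (f : ℝ → ℝ)
    (hf : ∀ x : ℝ, f x = Real.sqrt (a ^ 2 + b ^ 2 + c ^ 2 +
        2 * b * Real.sqrt (a ^ 2 + c ^ 2) * Real.sin (x / 2 + α))) :
    0 < deriv f θ :=
  stmt_3_general a b c α θ₀ θ hb hac hα hθ₀ hθ f hf
end

section
/- Suppose b < 0, a > 0, c > 0, √(a²+c²) > |b|, and α ∈ (0, π/2) is the phase angle. Let γ₁ = arcsin(|b|/√(a²+c²)). If max{-θ₀, 2(γ₁ - α)} < θ < min{π, 2(π - γ₁ - α)} with 0 < θ₀ < π/4, then f''(θ) > 0. -/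
/-!
Write `f(x) = √(A + B sin u)` with `u = x/2 + α`, `s = √(a²+c²)`, `A = s² + b²`, `B = 2bs`.
As `|B| < A` the radicand stays positive, and differentiating twice gives
`f'' = -B (2A sin u + B sin² u + B) / (16 g √g)`, `g = A + B sin u`.
For these `A, B` the numerator factors as `-4bs (s sin u + b)(s + b sin u)`, positive exactly
when `sin u > |b|/s`, i.e. on the window `γ₁ < u < π - γ₁` that the bounds on `θ` describe.
-/

open Real

theorem lt_sin_of_arcsin_lt_of_lt_pi_sub_arcsin {y u : ℝ} (h₁ : arcsin y < u)
    (h₂ : u < π - arcsin y) : y < sin u := by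
  have hy := neg_pi_div_two_le_arcsin y
  rcases le_or_gt u (π / 2) with hu | hu
  · exact (arcsin_lt_iff_lt_sin' ⟨by linarith, hu⟩).mp h₁
  · rw [← sin_pi_sub]
    exact (arcsin_lt_iff_lt_sin' ⟨by linarith, by linarith⟩).mp (by linarith)

section SqrtAddMulSin

variable {A B : ℝ}

theorem add_mul_sin_pos (h : |B| < A) (u : ℝ) : 0 < A + B * sin u := by
  have : |B * sin u| ≤ |B| := by
    rw [abs_mul]
    exact mul_le_of_le_one_right (abs_nonneg B) (abs_sin_le_one u)
  linarith [neg_abs_le (B * sin u)]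

variable (α : ℝ)

theorem hasDerivAt_div_two_add (x : ℝ) : HasDerivAt (fun x : ℝ => x / 2 + α) (1 / 2) x := by
  simpa using ((hasDerivAt_id x).div_const 2).add_const α

theorem hasDerivAt_add_mul_sin_half (x : ℝ) :
    HasDerivAt (fun x => A + B * sin (x / 2 + α)) (B * cos (x / 2 + α) / 2) x := by
  have hsin := (hasDerivAt_sin _).comp x (hasDerivAt_div_two_add α x)
  refine ((hsin.const_mul B).const_add A).congr_deriv ?_
  ring

theorem hasDerivAt_sqrt_add_mul_sin_half (h : |B| < A) (x : ℝ) :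
    HasDerivAt (fun x => √(A + B * sin (x / 2 + α)))
      (B * cos (x / 2 + α) / (4 * √(A + B * sin (x / 2 + α)))) x := by
  refine ((hasDerivAt_add_mul_sin_half α x).sqrt (add_mul_sin_pos h _).ne').congr_deriv ?_
  ring

theorem deriv_deriv_sqrt_add_mul_sin_half (h : |B| < A) (x : ℝ) :
    deriv (deriv fun x => √(A + B * sin (x / 2 + α))) x =
      -(B * (2 * A * sin (x / 2 + α) + B * sin (x / 2 + α) ^ 2 + B)) /
        (16 * (A + B * sin (x / 2 + α)) * √(A + B * sin (x / 2 + α))) := by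
  have hnum : HasDerivAt (fun x => B * cos (x / 2 + α)) (-(B * sin (x / 2 + α)) / 2) x := by
    refine (((hasDerivAt_cos _).comp x (hasDerivAt_div_two_add α x)).const_mul B).congr_deriv ?_
    ring
  have hden := (hasDerivAt_sqrt_add_mul_sin_half α h x).const_mul 4
  have hquot :
      HasDerivAt (fun x => B * cos (x / 2 + α) / (4 * √(A + B * sin (x / 2 + α)))) _ x :=
    hnum.div hden (mul_pos four_pos (sqrt_pos.mpr (add_mul_sin_pos h _))).ne'
  rw [funext fun x => (hasDerivAt_sqrt_add_mul_sin_half α h x).deriv, hquot.deriv]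
  generalize x / 2 + α = u
  have hg := add_mul_sin_pos h u
  have hq : 0 < √(A + B * sin u) := sqrt_pos.mpr hg
  field_simp
  rw [sq_sqrt hg.le, cos_sq']
  ring

end SqrtAddMulSin

theorem mul_quadratic_neg_of_neg_lt_mul {b s t : ℝ} (hb : b < 0) (hbs : -b < s)
    (hbt : -b < s * t) (ht : t ≤ 1) :
    2 * b * s * (2 * (s ^ 2 + b ^ 2) * t + 2 * b * s * t ^ 2 + 2 * b * s) < 0 := by
  have hfactor : 2 * b * s * (2 * (s ^ 2 + b ^ 2) * t + 2 * b * s * t ^ 2 + 2 * b * s) =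
      4 * b * s * ((s * t + b) * (s + b * t)) := by ring
  have hs : 0 < s := by linarith
  have hsbt : 0 < s + b * t := by nlinarith
  rw [hfactor]
  exact mul_neg_of_neg_of_pos (by nlinarith) (mul_pos (by linarith) hsbt)

theorem stmt_9_general (a b c α θ₀ θ : ℝ)
    (hb : b < 0)
    (hgt : Real.sqrt (a ^ 2 + c ^ 2) > |b|)
    (γ₁ : ℝ) (hγ₁ : γ₁ = Real.arcsin (|b| / Real.sqrt (a ^ 2 + c ^ 2)))
    (hθl : max (-θ₀) (2 * (γ₁ - α)) < θ)
    (hθr : θ < min π (2 * (π - γ₁ - α)))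
    (f : ℝ → ℝ)
    (hf : ∀ x : ℝ, f x = Real.sqrt (a ^ 2 + b ^ 2 + c ^ 2 +
        2 * b * Real.sqrt (a ^ 2 + c ^ 2) * Real.sin (x / 2 + α))) :
    0 < deriv (deriv f) θ := by
  set s := √(a ^ 2 + c ^ 2)
  have hbs : -b < s := by rwa [abs_of_neg hb] at hgt
  have hs : 0 < s := by linarith
  have hA : a ^ 2 + b ^ 2 + c ^ 2 = s ^ 2 + b ^ 2 := by
    rw [sq_sqrt (by positivity)]
    ring
  have hAB : |2 * b * s| < a ^ 2 + b ^ 2 + c ^ 2 := by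
    rw [hA, abs_of_neg (by nlinarith)]
    nlinarith
  have hsin : -b < s * sin (θ / 2 + α) := by
    have hγ : arcsin (-b / s) = γ₁ := by rw [hγ₁, abs_of_neg hb]
    rw [mul_comm, ← div_lt_iff₀ hs]
    apply lt_sin_of_arcsin_lt_of_lt_pi_sub_arcsin <;> rw [hγ]
    · linarith [le_max_right (-θ₀) (2 * (γ₁ - α))]
    · linarith [min_le_right π (2 * (π - γ₁ - α))]
  have hg := add_mul_sin_pos hAB (θ / 2 + α)
  rw [funext hf, deriv_deriv_sqrt_add_mul_sin_half α hAB]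
  refine div_pos (neg_pos.mpr ?_) (by positivity)
  rw [hA]
  exact mul_quadratic_neg_of_neg_lt_mul hb hbs hsin (sin_le_one _)

theorem stmt_9 (a b c α θ₀ θ : ℝ)
    (hb : b < 0) (ha : a > 0) (hc : c > 0)
    (hgt : Real.sqrt (a ^ 2 + c ^ 2) > |b|)
    (hα : α ∈ Set.Ioo 0 (π / 2))
    (hsin : Real.sin α = c / Real.sqrt (a ^ 2 + c ^ 2))
    (hcos : Real.cos α = a / Real.sqrt (a ^ 2 + c ^ 2))
    (hθ₀ : 0 < θ₀ ∧ θ₀ < π / 4)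
    (γ₁ : ℝ) (hγ₁ : γ₁ = Real.arcsin (|b| / Real.sqrt (a ^ 2 + c ^ 2)))
    (hθl : max (-θ₀) (2 * (γ₁ - α)) < θ)
    (hθr : θ < min π (2 * (π - γ₁ - α)))
    (f : ℝ → ℝ)
    (hf : ∀ x : ℝ, f x = Real.sqrt (a ^ 2 + b ^ 2 + c ^ 2 +
        2 * b * Real.sqrt (a ^ 2 + c ^ 2) * Real.sin (x / 2 + α))) :
    0 < deriv (deriv f) θ :=
  stmt_9_general a b c α θ₀ θ hb hgt γ₁ hγ₁ hθl hθr f hf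
end

section
/- Suppose b < 0, a > 0, c > 0, √(a²+c²) < |b|, and α ∈ (0, π/2) is the phase angle. Let γ₂ = arcsin(√(a²+c²)/|b|). If max{-θ₀, 2(γ₂ - α)} < θ < min{π, 2(π - γ₂ - α)} with 0 < θ₀ < π/4, then f''(θ) > 0. -/
/-!
With `r = √(a² + c²)` and `s = sin (θ/2 + α)` we have `f = √(b² + r² + 2brs)`, and differentiating
twice gives `f'' = -br (bs + r)(b + rs) / (4 f³)`. For `b < 0 < r < |b|` the factor `b + rs` is
always negative, so `f'' > 0` exactly when `bs + r < 0`, i.e. `s > r/|b| = sin γ₂`; the window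
`γ₂ < θ/2 + α < π - γ₂` forced by the bounds on `θ` is where this holds.
-/

open Real

lemma sin_lt_sin_of_lt_of_lt_pi_sub {γ u : ℝ} (hγ : -(π / 2) ≤ γ) (hγu : γ < u)
    (huγ : u < π - γ) : sin γ < sin u := by
  rcases le_or_gt u (π / 2) with hu | hu
  · exact sin_lt_sin_of_lt_of_le_pi_div_two hγ hu hγu
  · rw [← sin_pi_sub u]
    exact sin_lt_sin_of_lt_of_le_pi_div_two hγ (by linarith) (by linarith)

lemma lt_sin_of_arcsin_lt_of_lt_pi_sub_arcsin_s10 {q u : ℝ} (hq : -1 ≤ q) (hq' : q ≤ 1)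
    (hl : arcsin q < u) (hr : u < π - arcsin q) : q < sin u := by
  simpa only [sin_arcsin hq hq'] using
    sin_lt_sin_of_lt_of_lt_pi_sub (neg_pi_div_two_le_arcsin q) hl hr

section Radicand

variable {b r s : ℝ}

lemma sq_add_sq_add_two_mul_mul_pos (hrb : |r| < |b|) (hs : |s| ≤ 1) :
    0 < b ^ 2 + r ^ 2 + 2 * b * r * s := by
  have hbrs : |b * r * s| ≤ |b| * |r| := by
    rw [abs_mul, abs_mul]
    exact mul_le_of_le_one_right (by positivity) hs
  have hgap : 0 < (|b| - |r|) ^ 2 := by nlinarith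
  nlinarith [neg_abs_le (b * r * s), sq_abs b, sq_abs r]

/-- Quotient-rule form of `f''`; `S` stands for `√(b² + r² + 2brs)` and `co` for the cosine. -/
lemma second_deriv_numerator_eq {co S : ℝ} (hS : S ≠ 0)
    (hS2 : S ^ 2 = b ^ 2 + r ^ 2 + 2 * b * r * s) (hco : co ^ 2 = 1 - s ^ 2) :
    (-(b * r * s) / 2 * (2 * S) - b * r * co * (b * r * co / S)) / (2 * S) ^ 2 =
      -(b * r) * ((b * s + r) * (b + r * s)) / (4 * S ^ 3) := by
  field_simp
  linear_combination (-(4 * b * r * s)) * hS2 + (-(4 * b ^ 2 * r ^ 2)) * hco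

end Radicand

section SqrtSinRadicand

variable {b r : ℝ} (α : ℝ)

lemma hasDerivAt_sin_radicand (x : ℝ) :
    HasDerivAt (fun x => b ^ 2 + r ^ 2 + 2 * b * r * sin (x / 2 + α))
      (b * r * cos (x / 2 + α)) x := by
  have hu : HasDerivAt (fun x : ℝ => x / 2 + α) (1 / 2) x := by
    simpa using ((hasDerivAt_id x).div_const 2).add_const α
  exact ((((hasDerivAt_sin _).comp x hu).const_mul (2 * b * r)).const_add
    (b ^ 2 + r ^ 2)).congr_deriv (by ring)

variable (hrb : |r| < |b|)
include hrb

lemma sin_radicand_pos (x : ℝ) : 0 < b ^ 2 + r ^ 2 + 2 * b * r * sin (x / 2 + α) :=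
  sq_add_sq_add_two_mul_mul_pos hrb (abs_sin_le_one _)

lemma deriv_sqrt_sin_radicand :
    deriv (fun x => √(b ^ 2 + r ^ 2 + 2 * b * r * sin (x / 2 + α))) =
      fun x => b * r * cos (x / 2 + α) / (2 * √(b ^ 2 + r ^ 2 + 2 * b * r * sin (x / 2 + α))) :=
  funext fun x => by
    simpa [div_eq_mul_inv, mul_comm] using
      ((hasDerivAt_sin_radicand α x).sqrt (sin_radicand_pos α hrb x).ne').deriv

lemma hasDerivAt_deriv_sqrt_sin_radicand (x : ℝ) :
    HasDerivAt (deriv fun x => √(b ^ 2 + r ^ 2 + 2 * b * r * sin (x / 2 + α)))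
      (-(b * r) * ((b * sin (x / 2 + α) + r) * (b + r * sin (x / 2 + α))) /
        (4 * √(b ^ 2 + r ^ 2 + 2 * b * r * sin (x / 2 + α)) ^ 3)) x := by
  have hR := sin_radicand_pos α hrb x
  have hS : 0 < √(b ^ 2 + r ^ 2 + 2 * b * r * sin (x / 2 + α)) := sqrt_pos.mpr hR
  have hu : HasDerivAt (fun x : ℝ => x / 2 + α) (1 / 2) x := by
    simpa using ((hasDerivAt_id x).div_const 2).add_const α
  have hnum : HasDerivAt (fun x => b * r * cos (x / 2 + α))
      (-(b * r * sin (x / 2 + α)) / 2) x :=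
    (((hasDerivAt_cos _).comp x hu).const_mul (b * r)).congr_deriv (by ring)
  have hden : HasDerivAt (fun x => 2 * √(b ^ 2 + r ^ 2 + 2 * b * r * sin (x / 2 + α)))
      (b * r * cos (x / 2 + α) / √(b ^ 2 + r ^ 2 + 2 * b * r * sin (x / 2 + α))) x := by
    refine (((hasDerivAt_sin_radicand α x).sqrt hR.ne').const_mul 2).congr_deriv ?_
    field_simp
  rw [deriv_sqrt_sin_radicand α hrb, ← second_deriv_numerator_eq hS.ne' (sq_sqrt hR.le)
    (cos_sq' _)]
  exact hnum.div hden (by positivity)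

end SqrtSinRadicand

lemma deriv_deriv_sqrt_sin_radicand_pos {b r α x : ℝ} (hb : b < 0) (hr : 0 < r)
    (hsin : r < -b * sin (x / 2 + α)) :
    0 < deriv (deriv fun x => √(b ^ 2 + r ^ 2 + 2 * b * r * sin (x / 2 + α))) x := by
  have hrb : |r| < |b| := by
    rw [abs_of_pos hr, abs_of_neg hb]
    nlinarith [sin_le_one (x / 2 + α)]
  rw [(hasDerivAt_deriv_sqrt_sin_radicand α hrb x).deriv]
  have hbr : 0 < -(b * r) := by nlinarith
  have hbs : b * sin (x / 2 + α) + r < 0 := by linarith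
  have hrs : b + r * sin (x / 2 + α) < 0 := by nlinarith [sin_le_one (x / 2 + α)]
  have hS := sqrt_pos.mpr (sin_radicand_pos α hrb x)
  exact div_pos (mul_pos hbr (mul_pos_of_neg_of_neg hbs hrs)) (by positivity)

theorem stmt_10_general (a b c α θ₀ θ : ℝ)
    (hb : b < 0)
    (hlt : Real.sqrt (a ^ 2 + c ^ 2) < |b|) (hpos : 0 < Real.sqrt (a ^ 2 + c ^ 2))
    (γ₂ : ℝ) (hγ₂ : γ₂ = Real.arcsin (Real.sqrt (a ^ 2 + c ^ 2) / |b|))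
    (hθl : max (-θ₀) (2 * (γ₂ - α)) < θ)
    (hθr : θ < min π (2 * (π - γ₂ - α)))
    (f : ℝ → ℝ)
    (hf : ∀ x : ℝ, f x = Real.sqrt (a ^ 2 + b ^ 2 + c ^ 2 +
        2 * b * Real.sqrt (a ^ 2 + c ^ 2) * Real.sin (x / 2 + α))) :
    0 < deriv (deriv f) θ := by
  set r := √(a ^ 2 + c ^ 2)
  have hf' : f = fun x => √(b ^ 2 + r ^ 2 + 2 * b * r * sin (x / 2 + α)) := by
    ext x
    rw [hf, sq_sqrt (by positivity)]
    ring_nf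
  have hb' : 0 < |b| := hpos.trans hlt
  have hsin : r / |b| < sin (θ / 2 + α) :=
    lt_sin_of_arcsin_lt_of_lt_pi_sub_arcsin_s10 (by linarith [div_pos hpos hb'])
      ((div_lt_one hb').mpr hlt).le (by linarith [le_max_right (-θ₀) (2 * (γ₂ - α))])
      (by linarith [min_le_right π (2 * (π - γ₂ - α))])
  rw [div_lt_iff₀ hb', abs_of_neg hb] at hsin
  rw [hf']
  exact deriv_deriv_sqrt_sin_radicand_pos hb hpos (by linarith)

theorem stmt_10 (a b c α θ₀ θ : ℝ)
    (hb : b < 0) (ha : a > 0) (hc : c > 0)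
    (hlt : Real.sqrt (a ^ 2 + c ^ 2) < |b|) (hpos : 0 < Real.sqrt (a ^ 2 + c ^ 2))
    (hα : α ∈ Set.Ioo 0 (π / 2))
    (hsin : Real.sin α = c / Real.sqrt (a ^ 2 + c ^ 2))
    (hcos : Real.cos α = a / Real.sqrt (a ^ 2 + c ^ 2))
    (hθ₀ : 0 < θ₀ ∧ θ₀ < π / 4)
    (γ₂ : ℝ) (hγ₂ : γ₂ = Real.arcsin (Real.sqrt (a ^ 2 + c ^ 2) / |b|))
    (hθl : max (-θ₀) (2 * (γ₂ - α)) < θ)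
    (hθr : θ < min π (2 * (π - γ₂ - α)))
    (f : ℝ → ℝ)
    (hf : ∀ x : ℝ, f x = Real.sqrt (a ^ 2 + b ^ 2 + c ^ 2 +
        2 * b * Real.sqrt (a ^ 2 + c ^ 2) * Real.sin (x / 2 + α))) :
    0 < deriv (deriv f) θ :=
  stmt_10_general a b c α θ₀ θ hb hlt hpos γ₂ hγ₂ hθl hθr f hf
end

section
/- Suppose b < 0, a < 0, c > 0, α ∈ (π/2, π), 0 < θ₀ < min{2α - π, π/4}, and set C = √(a²+c²)·sin(-θ₀/2 + α). If |b| < min{√(a²+c²), C}, and -θ₀ < θ < 2(π - γ₃ - α) where γ₃ = arcsin(|b|/√(a²+c²)), then f''(θ) > 0. -/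
/-!
Writing `s = √(a² + c²)` and `u = sin (θ / 2 + α)`, the function is `f = √g` with
`g = s² + b² + 2 b s u`, and the second-derivative formula `f'' = (2 g g'' - g'²) / (4 g √g)`
gives `f''(θ) = -b s (s u + b) (s + b u) / (4 g √g)`. The factor `s + b u` is positive because
`|b| < s`, and `s u + b` is positive because `θ / 2 + α` lies in `(π / 2, π - γ₃)`, where
`sin` exceeds `sin γ₃ = |b| / s`.
-/

open Real

theorem deriv_deriv_sqrt_comp {g g' g'' : ℝ → ℝ} (hg : ∀ x, HasDerivAt g (g' x) x)
    (hg' : ∀ x, HasDerivAt g' (g'' x) x) (hpos : ∀ x, 0 < g x) (x : ℝ) :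
    deriv (deriv fun y => √(g y)) x = (2 * g x * g'' x - g' x ^ 2) / (4 * g x * √(g x)) := by
  have hderiv : deriv (fun y => √(g y)) = fun y => g' y / (2 * √(g y)) :=
    funext fun y => ((hg y).sqrt (hpos y).ne').deriv
  have hsqrt : 0 < √(g x) := sqrt_pos.2 (hpos x)
  have hg0 : g x ≠ 0 := (hpos x).ne'
  have hquot : HasDerivAt (fun y => g' y / (2 * √(g y)))
      ((g'' x * (2 * √(g x)) - g' x * (2 * (g' x / (2 * √(g x))))) / (2 * √(g x)) ^ 2) x :=
    (hg' x).div (((hg x).sqrt (hpos x).ne').const_mul 2) (by positivity)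
  rw [hderiv, hquot.deriv]
  field_simp
  rw [sq_sqrt (hpos x).le]
  ring

theorem deriv_deriv_sqrt_add_mul_sin {p q α : ℝ} (hpos : ∀ x, 0 < p + q * sin (x / 2 + α))
    (x : ℝ) :
    deriv (deriv fun y => √(p + q * sin (y / 2 + α))) x =
      -q * (2 * p * sin (x / 2 + α) + q * (sin (x / 2 + α) ^ 2 + 1)) /
        (16 * (p + q * sin (x / 2 + α)) * √(p + q * sin (x / 2 + α))) := by
  have hphase (y : ℝ) : HasDerivAt (fun z => z / 2 + α) (1 / 2) y :=
    ((hasDerivAt_id y).div_const 2).add_const α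
  have hg (y : ℝ) : HasDerivAt (fun z => p + q * sin (z / 2 + α))
      (q * (cos (y / 2 + α) * (1 / 2))) y :=
    (((hasDerivAt_sin _).comp y (hphase y)).const_mul q).const_add p
  have hg' (y : ℝ) : HasDerivAt (fun z => q * (cos (z / 2 + α) * (1 / 2)))
      (q * (-sin (y / 2 + α) * (1 / 2) * (1 / 2))) y :=
    (((hasDerivAt_cos _).comp y (hphase y)).mul_const _).const_mul q
  rw [deriv_deriv_sqrt_comp hg hg' hpos]
  have hpyth := cos_sq_add_sin_sq (x / 2 + α)
  have hgx := hpos x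
  generalize sin (x / 2 + α) = w at *
  generalize cos (x / 2 + α) = v at *
  have hsqrt : 0 < √(p + q * w) := sqrt_pos.2 hgx
  rw [div_eq_div_iff (by positivity) (by positivity)]
  linear_combination (-4 * q ^ 2 * √(p + q * w) * (p + q * w)) * hpyth

theorem lt_sin_of_lt_pi_sub_arcsin {r t : ℝ} (ht : π / 2 ≤ t) (htr : t < π - arcsin r) :
    r < sin t := by
  rw [← sin_pi_sub]
  exact (arcsin_lt_iff_lt_sin' ⟨by linarith [neg_pi_div_two_le_arcsin r], by linarith⟩).1
    (by linarith)

theorem stmt_11_general (a b c α θ₀ θ C : ℝ)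
    (hb : b < 0)
    (hθ₀ : 0 < θ₀ ∧ θ₀ < min (2 * α - π) (π / 4))
    (hbsmall : |b| < min (Real.sqrt (a ^ 2 + c ^ 2)) C)
    (γ₃ : ℝ) (hγ₃ : γ₃ = Real.arcsin (|b| / Real.sqrt (a ^ 2 + c ^ 2)))
    (hθ : -θ₀ < θ ∧ θ < 2 * (π - γ₃ - α))
    (f : ℝ → ℝ)
    (hf : ∀ x : ℝ, f x = Real.sqrt (a ^ 2 + b ^ 2 + c ^ 2 +
        2 * b * Real.sqrt (a ^ 2 + c ^ 2) * Real.sin (x / 2 + α))) :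
    0 < deriv (deriv f) θ := by
  set s := √(a ^ 2 + c ^ 2)
  have hbs : |b| < s := hbsmall.trans_le (min_le_left _ _)
  rw [abs_of_neg hb] at hbs hγ₃
  have hs : 0 < s := by linarith
  have hf' : f = fun x => √((s ^ 2 + b ^ 2) + 2 * b * s * sin (x / 2 + α)) := by
    funext x
    rw [hf, sq_sqrt (by positivity)]
    ring_nf
  have hg (x : ℝ) : 0 < (s ^ 2 + b ^ 2) + 2 * b * s * sin (x / 2 + α) := by
    nlinarith [sin_le_one (x / 2 + α), mul_pos hs (neg_pos.2 hb)]
  set u := sin (θ / 2 + α)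
  have hsu : 0 < s * u + b := by
    have hlt : -b / s < u := lt_sin_of_lt_pi_sub_arcsin
      (by linarith [hθ.1, hθ₀.2.trans_le (min_le_left _ _)]) (by linarith [hθ.2])
    linarith [(div_lt_iff₀ hs).1 hlt]
  have hbu : 0 < s + b * u := by nlinarith [sin_le_one (θ / 2 + α)]
  rw [hf', deriv_deriv_sqrt_add_mul_sin hg]
  have hnum : -(2 * b * s) * (2 * (s ^ 2 + b ^ 2) * u + 2 * b * s * (u ^ 2 + 1)) =
      4 * (-b) * s * ((s * u + b) * (s + b * u)) := by ring
  rw [hnum]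
  exact div_pos (mul_pos (mul_pos (mul_pos (by norm_num) (neg_pos.2 hb)) hs) (mul_pos hsu hbu))
    (mul_pos (mul_pos (by norm_num) (hg θ)) (sqrt_pos.2 (hg θ)))

theorem stmt_11 (a b c α θ₀ θ C : ℝ)
    (hb : b < 0) (ha : a < 0) (hc : c > 0)
    (hα : α ∈ Set.Ioo (π / 2) π)
    (hsin : Real.sin α = c / Real.sqrt (a ^ 2 + c ^ 2))
    (hcos : Real.cos α = a / Real.sqrt (a ^ 2 + c ^ 2))
    (hθ₀ : 0 < θ₀ ∧ θ₀ < min (2 * α - π) (π / 4))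
    (hC : C = Real.sqrt (a ^ 2 + c ^ 2) * Real.sin (-θ₀ / 2 + α))
    (hbsmall : |b| < min (Real.sqrt (a ^ 2 + c ^ 2)) C)
    (γ₃ : ℝ) (hγ₃ : γ₃ = Real.arcsin (|b| / Real.sqrt (a ^ 2 + c ^ 2)))
    (hθ : -θ₀ < θ ∧ θ < 2 * (π - γ₃ - α))
    (f : ℝ → ℝ)
    (hf : ∀ x : ℝ, f x = Real.sqrt (a ^ 2 + b ^ 2 + c ^ 2 +
        2 * b * Real.sqrt (a ^ 2 + c ^ 2) * Real.sin (x / 2 + α))) :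
    0 < deriv (deriv f) θ :=
  stmt_11_general a b c α θ₀ θ C hb hθ₀ hbsmall γ₃ hγ₃ hθ f hf
end
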